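/- If a vertex operator algebra V is C_n-cofinite for some n ≥ 2, then V is C_m-cofinite for all m ≥ 2. In particular, C_2-cofiniteness is equivalent to C_n-cofiniteness for any fixed n ≥ 2. -/
import Mathlib


open scoped BigOperators

namespace VOAPaper

/-- Integer binomial coefficient `C(m, i)` for `m : ℤ`, `i : ℕ`. -/
def zchoose (m : ℤ) (i : ℕ) : ℤ :=
  if 0 ≤ m then ((m.toNat).choose i : ℤ)
  else (-1) ^ i * ((((i : ℤ) - m - 1).toNat).choose i : ℤ)

variable (V : Type) [AddCommGroup V] [Module ℂ V]

/-- A vertex algebra structure on `V`: modes `u_n`, vacuum, truncation,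
vacuum/creation axioms, and the Borcherds (Jacobi) identity. -/
structure VertexAlg where
  mode : V →ₗ[ℂ] ℤ → Module.End ℂ V
  vac : V
  trunc : ∀ u w : V, ∃ N : ℤ, ∀ n : ℤ, N ≤ n → mode u n w = 0
  vac_mode : ∀ (n : ℤ) (w : V), mode vac n w = if n = -1 then w else 0
  creation_neg_one : ∀ u : V, mode u (-1) vac = u
  creation_nonneg : ∀ (u : V) (n : ℤ), 0 ≤ n → mode u n vac = 0
  borcherds : ∀ (u v w : V) (p q m : ℤ),
    (∑ᶠ i : ℕ, zchoose m i • mode (mode u (p + i) v) (m + q - i) w) =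
    (∑ᶠ i : ℕ, ((-1 : ℤ) ^ i * zchoose p i) •
      (mode u (p + m - i) (mode v (q + i) w)
        - (p.negOnePow : ℤ) • mode v (p + q - i) (mode u (m + i) w)))

/-- A vertex operator algebra of CFT-type: a vertex algebra with conformal
vector `ω`, central charge `c`, an `L(0)`-grading `V = ⊕_{n ≥ 0} V_n` with
`V_0 = ℂ 1`, Virasoro relations, and the `L(-1)`-derivation property. -/
structure VOA extends VertexAlg V where
  ω : V
  c : ℂ
  grading : ℤ → Submodule ℂ V
  internal : DirectSum.IsInternal grading
  neg_bot : ∀ n : ℤ, n < 0 → grading n = ⊥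
  L0_eigen : ∀ (n : ℤ) (v : V), v ∈ grading n → mode ω 1 v = (n : ℂ) • v
  vac_grade : vac ∈ grading 0
  cft : grading 0 = Submodule.span ℂ {vac}
  ω_grade : ω ∈ grading 2
  virasoro : ∀ m n : ℤ,
    mode ω (m + 1) * mode ω (n + 1) - mode ω (n + 1) * mode ω (m + 1)
      = (m - n) • mode ω (m + n + 1)
        + (if m + n = 0 then ((m ^ 3 - m : ℂ) / 12) * c else 0) • (1 : Module.End ℂ V)
  Lneg1_deriv : ∀ (u : V) (n : ℤ), mode (mode ω 0 u) n = (-n) • mode u (n - 1)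

/-- A weak module for (the underlying vertex algebra of) `V`. -/
structure WeakMod (A : VertexAlg V) (M : Type) [AddCommGroup M] [Module ℂ M] where
  mmode : V →ₗ[ℂ] ℤ → Module.End ℂ M
  trunc : ∀ (v : V) (w : M), ∃ N : ℤ, ∀ n : ℤ, N ≤ n → mmode v n w = 0
  vac_mode : ∀ (n : ℤ) (w : M), mmode A.vac n w = if n = -1 then w else 0
  borcherds : ∀ (u v : V) (w : M) (p q m : ℤ),
    (∑ᶠ i : ℕ, zchoose m i • mmode (A.mode u (p + i) v) (m + q - i) w) =
    (∑ᶠ i : ℕ, ((-1 : ℤ) ^ i * zchoose p i) •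
      (mmode u (p + m - i) (mmode v (q + i) w)
        - (p.negOnePow : ℤ) • mmode v (p + q - i) (mmode u (m + i) w)))

/-- An ℕ-gradable weak module: a weak module with a compatible
lower-truncated grading `M = ⊕_{n ≥ 0} M(n)`. -/
structure NGradedMod (W : VOA V) (M : Type) [AddCommGroup M] [Module ℂ M]
    extends WeakMod V W.toVertexAlg M where
  mgrading : ℤ → Submodule ℂ M
  internal : DirectSum.IsInternal mgrading
  neg_bot : ∀ n : ℤ, n < 0 → mgrading n = ⊥
  compat : ∀ (r : ℤ) (v : V), v ∈ W.grading r → ∀ (m n : ℤ), ∀ w ∈ mgrading n,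
    mmode v m w ∈ mgrading (n + r - m - 1)

/-- Iterated application of modes: `applyModes [(u¹,n₁),…,(uʳ,nᵣ)] w = u¹_{n₁} ⋯ uʳ_{nᵣ} w`. -/
def applyModes (A : VertexAlg V) : List (V × ℤ) → V → V
  | [], w => w
  | p :: L, w => A.mode p.1 p.2 (applyModes A L w)

/-- Iterated application of module modes. -/
def applyModesM {M : Type} [AddCommGroup M] [Module ℂ M] {A : VertexAlg V}
    (Mod : WeakMod V A M) : List (V × ℤ) → M → M
  | [], w => w
  | p :: L, w => Mod.mmode p.1 p.2 (applyModesM Mod L w)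

/-- The subspace `C_n(V) = span{ u_{-n} v }`. -/
def Cspace (A : VertexAlg V) (n : ℕ) : Submodule ℂ V :=
  Submodule.span ℂ { x | ∃ u v : V, x = A.mode u (-(n : ℤ)) v }

/-- The subspace `C_1(V) = span{ u_{-1} v, L(-1)u : u, v ∈ V_+ }`. -/
def C1space (W : VOA V) : Submodule ℂ V :=
  Submodule.span ℂ
    ({ x | ∃ u v : V, (∃ r : ℤ, 0 < r ∧ u ∈ W.grading r) ∧
        (∃ r : ℤ, 0 < r ∧ v ∈ W.grading r) ∧ x = W.mode u (-1) v }
      ∪ { x | ∃ u : V, (∃ r : ℤ, 0 < r ∧ u ∈ W.grading r) ∧ x = W.mode W.ω 0 u })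

/-- A submodule invariant under all modes. -/
def Invariant {M : Type} [AddCommGroup M] [Module ℂ M] {A : VertexAlg V}
    (Mod : WeakMod V A M) (N : Submodule ℂ M) : Prop :=
  ∀ (v : V) (n : ℤ), ∀ w ∈ N, Mod.mmode v n w ∈ N

/-- Irreducibility of a weak module. -/
def IsIrreducibleMod {M : Type} [AddCommGroup M] [Module ℂ M] {A : VertexAlg V}
    (Mod : WeakMod V A M) : Prop :=
  (⊤ : Submodule ℂ M) ≠ ⊥ ∧
    ∀ N : Submodule ℂ M, Invariant V Mod N → N = ⊥ ∨ N = ⊤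

section Proof

variable {V : Type} [AddCommGroup V] [Module ℂ V]

lemma zchoose_zero (i : ℕ) : zchoose 0 i = if i = 0 then 1 else 0 := by
  unfold zchoose
  rw [if_pos le_rfl]
  cases i with
  | zero => simp
  | succ k => simp [Nat.choose]

lemma zchoose_neg_one (i : ℕ) : zchoose (-1) i = (-1) ^ i := by
  unfold zchoose
  rw [if_neg (by norm_num)]
  have : ((i : ℤ) - (-1) - 1).toNat = i := by omega
  rw [this, Nat.choose_self]
  ring

/-- mode of 0 is 0. -/
lemma mode_zero_left (A : VertexAlg V) (k : ℤ) (w : V) : A.mode 0 k w = 0 := by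
  have h : A.mode 0 = 0 := map_zero A.mode
  rw [h]
  rfl

/-- Iterate (associativity) formula: Borcherds with `m = 0`. -/
lemma iterate_formula (A : VertexAlg V) (u v w : V) (p q : ℤ) :
    A.mode (A.mode u p v) q w =
      ∑ᶠ i : ℕ, ((-1 : ℤ) ^ i * zchoose p i) •
        (A.mode u (p - i) (A.mode v (q + i) w)
          - (p.negOnePow : ℤ) • A.mode v (p + q - i) (A.mode u (i : ℤ) w)) := by
  have h := A.borcherds u v w p q 0
  have e : (∑ᶠ i : ℕ, zchoose 0 i • A.mode (A.mode u (p + i) v) (0 + q - i) w)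
      = zchoose 0 0 • A.mode (A.mode u (p + 0) v) (0 + q - 0) w :=
    finsum_eq_single _ 0 (fun i hi => by
      rw [zchoose_zero, if_neg hi, zero_smul])
  rw [e] at h
  simp only [zchoose_zero, if_pos rfl, eq_self_iff_true, if_true, one_smul, Nat.cast_zero,
    add_zero, sub_zero, zero_add] at h
  exact h

/-- Commutator-type formula: Borcherds with `p = 0`. -/
lemma comm_formula (A : VertexAlg V) (u v w : V) (q m : ℤ) :
    A.mode u m (A.mode v q w) =
      A.mode v q (A.mode u m w)
        + ∑ᶠ i : ℕ, zchoose m i • A.mode (A.mode u (i : ℤ) v) (m + q - i) w := by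
  have h := A.borcherds u v w 0 q m
  have e : (∑ᶠ i : ℕ, ((-1 : ℤ) ^ i * zchoose 0 i) •
        (A.mode u (0 + m - i) (A.mode v (q + i) w)
          - ((0 : ℤ).negOnePow : ℤ) • A.mode v (0 + q - i) (A.mode u (m + i) w)))
      = ((-1 : ℤ) ^ 0 * zchoose 0 0) •
        (A.mode u (0 + m - 0) (A.mode v (q + 0) w)
          - ((0 : ℤ).negOnePow : ℤ) • A.mode v (0 + q - 0) (A.mode u (m + 0) w)) :=
    finsum_eq_single _ 0 (fun i hi => by
      rw [zchoose_zero, if_neg hi, mul_zero, zero_smul])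
  rw [e] at h
  simp only [zchoose_zero, if_pos rfl, eq_self_iff_true, if_true, pow_zero, one_mul, one_smul,
    Nat.cast_zero, add_zero, sub_zero, zero_add, Int.negOnePow_zero, Units.val_one] at h
  rw [h]
  abel

/-- Generators lie in `C_k`. -/
lemma mem_Cspace (A : VertexAlg V) (k : ℕ) (u v : V) :
    A.mode u (-(k : ℤ)) v ∈ Cspace V A k :=
  Submodule.subset_span ⟨u, v, rfl⟩

/-- `C_{k+1} ⊆ C_k` for `k ≥ 1`, via the `L(-1)`-derivation property. -/
lemma Cspace_succ_le (W : VOA V) {k : ℕ} (hk : 1 ≤ k) :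
    Cspace V W.toVertexAlg (k + 1) ≤ Cspace V W.toVertexAlg k := by
  rw [Cspace, Submodule.span_le]
  rintro x ⟨u, v, rfl⟩
  have hd := W.Lneg1_deriv u (-(k : ℤ))
  have hd2 : W.mode (W.mode W.ω 0 u) (-(k : ℤ)) v
      = (k : ℤ) • W.mode u (-((k : ℕ) + 1 : ℕ) : ℤ) v := by
    rw [hd]
    have : (-(k : ℤ) - 1) = (-((k : ℕ) + 1 : ℕ) : ℤ) := by push_cast; ring
    rw [this]
    simp
  have hne : ((k : ℂ)) ≠ 0 := Nat.cast_ne_zero.mpr (by omega)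
  have : W.mode u (-((k : ℕ) + 1 : ℕ) : ℤ) v
      = (k : ℂ)⁻¹ • W.mode (W.mode W.ω 0 u) (-(k : ℤ)) v := by
    rw [hd2, ← Int.cast_smul_eq_zsmul ℂ, smul_smul]
    have hc : ((k : ℂ))⁻¹ * (((k : ℤ) : ℂ)) = 1 := by
      push_cast
      exact inv_mul_cancel₀ hne
    rw [hc, one_smul]
  rw [this]
  exact Submodule.smul_mem _ _ (mem_Cspace W.toVertexAlg k _ v)

/-- `C_j ⊆ C_k` for `j ≥ k ≥ 1`. -/
lemma Cspace_mono (W : VOA V) {k j : ℕ} (hk : 1 ≤ k) (hkj : k ≤ j) :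
    Cspace V W.toVertexAlg j ≤ Cspace V W.toVertexAlg k := by
  induction j with
  | zero => omega
  | succ m ih =>
    rcases Nat.lt_or_ge k (m + 1) with hlt | hge
    · exact le_trans (Cspace_succ_le W (by omega)) (ih (by omega))
    · have : k = m + 1 := by omega
      subst this
      exact le_rfl

/-- Any mode with index `≤ -k` lands in `C_k`. -/
lemma mem_Cspace_of_le (W : VOA V) {k : ℕ} (hk : 1 ≤ k) {q : ℤ} (hq : q ≤ -(k : ℤ))
    (u v : V) : W.mode u q v ∈ Cspace V W.toVertexAlg k := by
  have hq' : q = -(((-q).toNat : ℕ) : ℤ) := by omega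
  have hle : k ≤ (-q).toNat := by omega
  rw [hq']
  exact Cspace_mono W hk hle (mem_Cspace W.toVertexAlg _ u v)

/-- `C_{n+1}` is invariant under nonpositive modes applied to deep modes. -/
lemma mode_mode_mem (W : VOA V) {n : ℕ} (f u x : V) {k q : ℤ}
    (hk : k ≤ 0) (hq : q ≤ -((n : ℤ) + 1)) :
    W.mode f k (W.mode u q x) ∈ Cspace V W.toVertexAlg (n + 1) := by
  have hn1 : (1 : ℕ) ≤ n + 1 := by omega
  have hcast : -(((n : ℕ) + 1 : ℕ) : ℤ) = -((n : ℤ) + 1) := by push_cast; ring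
  rw [comm_formula]
  apply Submodule.add_mem
  · exact mem_Cspace_of_le W hn1 (by omega) u (W.mode f k x)
  · apply finsum_induction
    · exact Submodule.zero_mem _
    · exact fun a b ha hb => Submodule.add_mem _ ha hb
    · intro i
      apply Submodule.smul_of_tower_mem
      exact mem_Cspace_of_le W hn1 (by push_cast; omega) _ x

/-- Key lemma: `f_{-n} g_{-n} x ∈ C_{n+1}` for `n ≥ 2`. -/
lemma key_lemma (W : VOA V) {n : ℕ} (hn : 2 ≤ n) (f g x : V) :
    W.mode f (-(n : ℤ)) (W.mode g (-(n : ℤ)) x) ∈ Cspace V W.toVertexAlg (n + 1) := by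
  obtain ⟨T, hTdef, hS⟩ : ∃ T : ℕ → V,
      (∀ i : ℕ, T i = ((-1 : ℤ) ^ i * zchoose (-1) i) •
        (W.toVertexAlg.mode f (-1 - i) (W.toVertexAlg.mode g (-(2 * (n : ℤ) - 1) + i) x)
          - (((-1 : ℤ)).negOnePow : ℤ) •
            W.toVertexAlg.mode g (-1 + -(2 * (n : ℤ) - 1) - i)
              (W.toVertexAlg.mode f (i : ℤ) x))) ∧
      W.toVertexAlg.mode (W.toVertexAlg.mode f (-1) g) (-(2 * (n : ℤ) - 1)) x = ∑ᶠ i : ℕ, T i :=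
    ⟨_, fun i => rfl, iterate_formula W.toVertexAlg f g x (-1) (-(2 * (n : ℤ) - 1))⟩
  have hn1 : (1 : ℕ) ≤ n + 1 := by omega
  -- every term except i = n-1 is in C_{n+1}
  have hTmem : ∀ i : ℕ, i ≠ n - 1 → T i ∈ Cspace V W.toVertexAlg (n + 1) := by
    intro i hi
    rw [hTdef i]
    apply Submodule.smul_of_tower_mem
    apply Submodule.sub_mem
    · rcases Nat.lt_or_ge i (n - 1) with hlt | hge
      · exact mode_mode_mem W f g x (by omega) (by push_cast; omega)
      · exact mem_Cspace_of_le W hn1 (by omega) f _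
    · apply Submodule.smul_of_tower_mem
      exact mem_Cspace_of_le W hn1 (by push_cast; omega) g _
  -- finite support
  have hsupp : (Function.support T).Finite := by
    obtain ⟨N₁, hN₁⟩ := W.toVertexAlg.trunc g x
    obtain ⟨N₂, hN₂⟩ := W.toVertexAlg.trunc f x
    apply Set.Finite.subset (Set.finite_Iio ((N₁ + 2 * n).toNat ⊔ N₂.toNat))
    intro i hi
    simp only [Set.mem_Iio]
    by_contra hbig
    apply hi
    have hb : (N₁ + 2 * n).toNat ≤ i ∧ N₂.toNat ≤ i := by
      constructor <;> omega
    have hz1 : W.toVertexAlg.mode g (-(2 * (n : ℤ) - 1) + i) x = 0 :=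
      hN₁ _ (by omega)
    have hz2 : W.toVertexAlg.mode f (i : ℤ) x = 0 := hN₂ _ (by omega)
    rw [hTdef i, hz1, hz2]
    simp
  -- split off the i = n-1 term
  have h1 : (Function.support fun i : ℕ => if i = n - 1 then T i else 0).Finite := by
    apply Set.Finite.subset (Set.finite_singleton (n - 1))
    intro i hi
    simp only [Set.mem_singleton_iff]
    by_contra hne
    exact hi (if_neg hne)
  have h2 : (Function.support fun i : ℕ => if i = n - 1 then (0 : V) else T i).Finite := by
    apply Set.Finite.subset hsupp
    intro i hi
    rcases eq_or_ne i (n - 1) with h | h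
    · exact absurd (by simp [h]) hi
    · intro h0; exact hi (by simp [if_neg h, h0])
  have hsum : ∑ᶠ i : ℕ, T i
      = T (n - 1) + ∑ᶠ i : ℕ, (if i = n - 1 then (0 : V) else T i) := by
    have hfun : ∀ i : ℕ, T i
        = (if i = n - 1 then T i else 0) + (if i = n - 1 then (0 : V) else T i) := by
      intro i; split <;> simp
    rw [finsum_congr hfun, finsum_add_distrib h1 h2,
      finsum_eq_single _ (n - 1) (fun x hx => if_neg hx), if_pos rfl]
  -- the tail sum is in C_{n+1}
  have htail : (∑ᶠ i : ℕ, (if i = n - 1 then (0 : V) else T i))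
      ∈ Cspace V W.toVertexAlg (n + 1) := by
    apply finsum_induction
    · exact Submodule.zero_mem _
    · exact fun a b ha hb => Submodule.add_mem _ ha hb
    · intro i
      rcases eq_or_ne i (n - 1) with h | h
      · rw [if_pos h]; exact Submodule.zero_mem _
      · rw [if_neg h]; exact hTmem i h
  -- hence T (n-1) ∈ C_{n+1}
  have hTn : T (n - 1) ∈ Cspace V W.toVertexAlg (n + 1) := by
    have hSC : W.toVertexAlg.mode (W.toVertexAlg.mode f (-1) g) (-(2 * (n : ℤ) - 1)) x
        ∈ Cspace V W.toVertexAlg (n + 1) :=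
      mem_Cspace_of_le W hn1 (by push_cast; omega) _ x
    rw [hS, hsum] at hSC
    have := Submodule.sub_mem _ hSC htail
    simpa using this
  -- extract the target from T (n-1)
  have hc : ((-1 : ℤ) ^ (n - 1) * zchoose (-1) (n - 1)) = 1 := by
    rw [zchoose_neg_one, ← mul_pow]
    norm_num
  have e1 : (-1 - ((n - 1 : ℕ) : ℤ)) = -(n : ℤ) := by omega
  have e2 : (-(2 * (n : ℤ) - 1) + ((n - 1 : ℕ) : ℤ)) = -(n : ℤ) := by omega
  have hx := hTdef (n - 1)
  rw [hc, one_smul, e1, e2] at hx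
  have hgoal : W.mode f (-(n : ℤ)) (W.mode g (-(n : ℤ)) x)
      = T (n - 1) + (((-1 : ℤ)).negOnePow : ℤ) •
          W.toVertexAlg.mode g (-1 + -(2 * (n : ℤ) - 1) - ((n - 1 : ℕ) : ℤ))
            (W.toVertexAlg.mode f (((n - 1 : ℕ) : ℤ)) x) := by
    rw [hx]; abel
  rw [hgoal]
  apply Submodule.add_mem _ hTn
  apply Submodule.smul_of_tower_mem
  exact mem_Cspace_of_le W hn1 (by push_cast; omega) g _

/-- `(a_{-n} b)_{-n} v ∈ C_{n+1}` for `n ≥ 2`. -/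
lemma gen_mode_mem (W : VOA V) {n : ℕ} (hn : 2 ≤ n) (a b v : V) :
    W.mode (W.mode a (-(n : ℤ)) b) (-(n : ℤ)) v ∈ Cspace V W.toVertexAlg (n + 1) := by
  have hn1 : (1 : ℕ) ≤ n + 1 := by omega
  rw [iterate_formula]
  apply finsum_induction
  · exact Submodule.zero_mem _
  · exact fun x y hx hy => Submodule.add_mem _ hx hy
  · intro i
    apply Submodule.smul_of_tower_mem
    apply Submodule.sub_mem
    · rcases Nat.eq_zero_or_pos i with h0 | hpos
      · subst h0
        have e1 : (-(n : ℤ) - ((0 : ℕ) : ℤ)) = -(n : ℤ) := by push_cast; ring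
        have e2 : (-(n : ℤ) + ((0 : ℕ) : ℤ)) = -(n : ℤ) := by push_cast; ring
        rw [e1, e2]
        exact key_lemma W hn a b v
      · exact mem_Cspace_of_le W hn1 (by push_cast; omega) a _
    · apply Submodule.smul_of_tower_mem
      exact mem_Cspace_of_le W hn1 (by push_cast; omega) b _

/-- `c_{-n} v ∈ C_{n+1}` for `c ∈ C_n`, `n ≥ 2`. -/
lemma Cn_mode_mem (W : VOA V) {n : ℕ} (hn : 2 ≤ n) {c : V}
    (hc : c ∈ Cspace V W.toVertexAlg n) (v : V) :
    W.mode c (-(n : ℤ)) v ∈ Cspace V W.toVertexAlg (n + 1) := by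
  induction hc using Submodule.span_induction with
  | mem x hx =>
    obtain ⟨a, b, rfl⟩ := hx
    exact gen_mode_mem W hn a b v
  | zero => rw [mode_zero_left]; exact Submodule.zero_mem _
  | add x y hx hy ihx ihy =>
    have : W.mode (x + y) (-(n : ℤ)) v = W.mode x (-(n : ℤ)) v + W.mode y (-(n : ℤ)) v := by
      rw [map_add]; rfl
    rw [this]; exact Submodule.add_mem _ ihx ihy
  | smul r x hx ihx =>
    have : W.mode (r • x) (-(n : ℤ)) v = r • W.mode x (-(n : ℤ)) v := by
      rw [map_smul]; rfl
    rw [this]; exact Submodule.smul_mem _ r ihx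

/-- `f_{-n} c ∈ C_{n+1}` for `c ∈ C_n`, `n ≥ 2`. -/
lemma mode_Cn_mem (W : VOA V) {n : ℕ} (hn : 2 ≤ n) (f : V) {c : V}
    (hc : c ∈ Cspace V W.toVertexAlg n) :
    W.mode f (-(n : ℤ)) c ∈ Cspace V W.toVertexAlg (n + 1) := by
  induction hc using Submodule.span_induction with
  | mem x hx =>
    obtain ⟨a, b, rfl⟩ := hx
    exact key_lemma W hn f a b
  | zero => rw [map_zero]; exact Submodule.zero_mem _
  | add x y hx hy ihx ihy => rw [map_add]; exact Submodule.add_mem _ ihx ihy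
  | smul r x hx ihx => rw [map_smul]; exact Submodule.smul_mem _ r ihx

/-- The inductive step: `C_n` cofinite implies `C_{n+1}` cofinite, `n ≥ 2`. -/
lemma step_cofinite (W : VOA V) {n : ℕ} (hn : 2 ≤ n)
    (h : FiniteDimensional ℂ (V ⧸ Cspace V W.toVertexAlg n)) :
    FiniteDimensional ℂ (V ⧸ Cspace V W.toVertexAlg (n + 1)) := by
  classical
  set Cn := Cspace V W.toVertexAlg n with hCn
  set Cn1 := Cspace V W.toVertexAlg (n + 1) with hCn1
  -- a finite set spanning V mod C_n
  obtain ⟨S, hSspan⟩ := Module.finite_def.mp h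
  let σ : (V ⧸ Cn) → V := Function.surjInv (Submodule.mkQ_surjective Cn)
  have hσ : ∀ y, Cn.mkQ (σ y) = y :=
    fun y => Function.surjInv_eq (Submodule.mkQ_surjective Cn) y
  set s : Set V := σ '' ↑S with hs
  have hsfin : s.Finite := S.finite_toSet.image σ
  have hmap : Submodule.map Cn.mkQ (Submodule.span ℂ s) = ⊤ := by
    rw [Submodule.map_span, hs, Set.image_image]
    simp only [hσ, Set.image_id']
    exact hSspan
  have hsup : Cn ⊔ Submodule.span ℂ s = ⊤ := by
    rw [← Submodule.comap_map_mkQ, hmap, Submodule.comap_top]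
  -- the bilinear mode map
  set Bmap : V →ₗ[ℂ] V →ₗ[ℂ] V :=
    { toFun := fun a => W.toVertexAlg.mode a (-(n : ℤ))
      map_add' := fun a b => by
        show W.toVertexAlg.mode (a + b) (-(n : ℤ)) = _
        rw [map_add]; rfl
      map_smul' := fun r a => by
        show W.toVertexAlg.mode (r • a) (-(n : ℤ)) = _
        rw [map_smul]; rfl } with hB
  set s' : Set V := s ∪ Set.image2 (fun a b => Bmap a b) s s with hs'
  have hs'fin : s'.Finite := hsfin.union (Set.Finite.image2 _ hsfin hsfin)
  -- C_n ≤ C_{n+1} ⊔ span s'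
  have hCle : Cn ≤ Cn1 ⊔ Submodule.span ℂ s' := by
    rw [hCn, Cspace, Submodule.span_le]
    rintro _ ⟨u, v, rfl⟩
    have hu : u ∈ Cn ⊔ Submodule.span ℂ s := hsup ▸ Submodule.mem_top
    obtain ⟨c, hcmem, u1, hu1, hcu⟩ := Submodule.mem_sup.mp hu
    have hv : v ∈ Cn ⊔ Submodule.span ℂ s := hsup ▸ Submodule.mem_top
    obtain ⟨c2, hc2, v1, hv1, hcv⟩ := Submodule.mem_sup.mp hv
    have hdecomp : W.mode u (-(n : ℤ)) v
        = W.mode c (-(n : ℤ)) v + (W.mode u1 (-(n : ℤ)) c2 + W.mode u1 (-(n : ℤ)) v1) := by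
      rw [← hcu, ← hcv]
      have h1 : W.toVertexAlg.mode (c + u1) = W.toVertexAlg.mode c + W.toVertexAlg.mode u1 :=
        map_add _ _ _
      rw [h1]
      simp only [Pi.add_apply, LinearMap.add_apply, map_add]
      abel
    rw [hdecomp]
    apply Submodule.add_mem
    · exact Submodule.mem_sup_left (Cn_mode_mem W hn hcmem v)
    apply Submodule.add_mem
    · exact Submodule.mem_sup_left (mode_Cn_mem W hn u1 hc2)
    · apply Submodule.mem_sup_right
      apply Submodule.span_mono (Set.subset_union_right (s := s))
      rw [← Submodule.map₂_span_span]
      exact Submodule.apply_mem_map₂ Bmap hu1 hv1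
  -- ⊤ = C_{n+1} ⊔ span s'
  have htop : Cn1 ⊔ Submodule.span ℂ s' = ⊤ := by
    rw [eq_top_iff, ← hsup]
    apply sup_le hCle
    exact le_trans (Submodule.span_mono Set.subset_union_left) le_sup_right
  -- conclude
  have hker : Submodule.map Cn1.mkQ Cn1 = ⊥ := by
    rw [eq_bot_iff]
    intro x hx
    obtain ⟨y, hy, rfl⟩ := Submodule.mem_map.mp hx
    simpa [Submodule.mem_bot, Submodule.mkQ_apply, Submodule.Quotient.mk_eq_zero] using hy
  have hqtop : Submodule.map Cn1.mkQ (Submodule.span ℂ s') = ⊤ := by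
    have := congrArg (Submodule.map Cn1.mkQ) htop
    rw [Submodule.map_sup, hker, bot_sup_eq] at this
    rw [this, Submodule.map_top, Submodule.range_mkQ]
  rw [Submodule.map_span] at hqtop
  have : Module.Finite ℂ (V ⧸ Cn1) := by
    rw [Module.finite_def, Submodule.fg_def]
    exact ⟨Cn1.mkQ '' s', hs'fin.image _, hqtop⟩
  exact this

/-- Quotient by a smaller `C`-space: transfer cofiniteness downward. -/
lemma cofinite_of_le (W : VOA V) {k m : ℕ} (hm : 1 ≤ m) (hmk : m ≤ k)
    (h : FiniteDimensional ℂ (V ⧸ Cspace V W.toVertexAlg k)) :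
    FiniteDimensional ℂ (V ⧸ Cspace V W.toVertexAlg m) := by
  have hle : Cspace V W.toVertexAlg k ≤ Cspace V W.toVertexAlg m := Cspace_mono W hm hmk
  let φ := Submodule.mapQ (Cspace V W.toVertexAlg k) (Cspace V W.toVertexAlg m)
    LinearMap.id (fun x hx => hle hx)
  have hsurj : Function.Surjective φ := by
    intro y
    obtain ⟨v, rfl⟩ := Submodule.mkQ_surjective _ y
    exact ⟨(Cspace V W.toVertexAlg k).mkQ v, by simp [φ, Submodule.mapQ_apply]⟩
  exact Module.Finite.of_surjective φ hsurj

end Proof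

/-- If `V` is `C_n`-cofinite for some `n ≥ 2`, then `V` is `C_m`-cofinite for all `m ≥ 2`. -/
theorem stmt10 (W : VOA V) (n : ℕ) (hn : 2 ≤ n)
    (h : FiniteDimensional ℂ (V ⧸ Cspace V W.toVertexAlg n)) :
    ∀ m : ℕ, 2 ≤ m → FiniteDimensional ℂ (V ⧸ Cspace V W.toVertexAlg m) := by
  have main : ∀ j : ℕ, FiniteDimensional ℂ (V ⧸ Cspace V W.toVertexAlg (n + j)) := by
    intro j
    induction j with
    | zero => simpa using h
    | succ k ih =>
      have hstep := step_cofinite W (n := n + k) (by omega) ih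
      have e : n + k + 1 = n + (k + 1) := by omega
      rwa [e] at hstep
  intro m hm
  rcases le_total m n with hle | hge
  · exact cofinite_of_le W (by omega) hle h
  · have e : n + (m - n) = m := by omega
    have hmain := main (m - n)
    rwa [e] at hmain

end VOAPaper
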